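/- No element of G other than the identity fixes more than 2 points of ℤ/p ∪ {∞}. -/

import Mathlib

/-!
The stabilizer of `∞` in `G` has order `|G| / (p + 1) = p (p - 1) / 2 < p²`, so the translations,
a subgroup of order `p`, form its unique Sylow `p`-subgroup and are normal in it. An element `σ`
fixing `∞` and `0` therefore conjugates `z ↦ z + 1` to some `z ↦ z + c`, which forces
`σ z = c z`; a further fixed point gives `c = 1`. Since `G` is transitive and contains the
translations, any three fixed points of an element can be conjugated to `∞`, `0` and a third
point.
-/

instance (X : Type*) [DecidableEq X] : DecidableEq (OnePoint X) :=
  inferInstanceAs (DecidableEq (Option X))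

/-- The translation `z ↦ z + a` on `ℤ/p ∪ {∞}`, fixing `∞`. -/
def ptrans (p : ℕ) (a : ZMod p) : Equiv.Perm (OnePoint (ZMod p)) :=
  Equiv.optionCongr (Equiv.addRight a)

/-- The map `z ↦ a z` on `ℤ/p ∪ {∞}`, fixing `∞`, for `a ≠ 0`. -/
def pmul (p : ℕ) [Fact p.Prime] (a : ZMod p) (ha : a ≠ 0) : Equiv.Perm (OnePoint (ZMod p)) :=
  Equiv.optionCongr (Equiv.mulLeft₀ a ha)

/-- Multiplication by `a` extended to `ℤ/p ∪ {∞}` (with `a·∞ = ∞`). -/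
def opSmul (p : ℕ) (a : ZMod p) : OnePoint (ZMod p) → OnePoint (ZMod p) :=
  fun x => Option.map (fun z => a * z) x

/-- Underlying function of the map `z ↦ -1/z`. -/
def negInvFun (p : ℕ) : OnePoint (ZMod p) → OnePoint (ZMod p)
  | Option.none => Option.some (0 : ZMod p)
  | Option.some z => if z = 0 then Option.none else Option.some (-z⁻¹ : ZMod p)

/-- The permutation `z ↦ -1/z` of `ℤ/p ∪ {∞}` (sending `0 ↦ ∞` and `∞ ↦ 0`). -/
def negInvPerm (p : ℕ) [Fact p.Prime] : Equiv.Perm (OnePoint (ZMod p)) :=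
  Function.Involutive.toPerm (negInvFun p) (by
    intro x
    match x with
    | Option.none => simp [negInvFun] <;> rfl
    | Option.some z =>
      by_cases hz : z = 0
      · simp [negInvFun, hz] <;> rfl
      · have h1 : (-z⁻¹ : ZMod p) ≠ 0 := by simp [hz]
        simp [negInvFun, hz, h1, inv_neg, inv_inv] <;> rfl)

/-- The involution `(0 ∞)(1 3)(2 6)(4 5)`. -/
def inv1 (p : ℕ) : Equiv.Perm (OnePoint (ZMod p)) :=
  Equiv.swap ((0 : ZMod p) : OnePoint (ZMod p)) OnePoint.infty *
  Equiv.swap ((1 : ZMod p) : OnePoint (ZMod p)) ((3 : ZMod p) : OnePoint (ZMod p)) *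
  Equiv.swap ((2 : ZMod p) : OnePoint (ZMod p)) ((6 : ZMod p) : OnePoint (ZMod p)) *
  Equiv.swap ((4 : ZMod p) : OnePoint (ZMod p)) ((5 : ZMod p) : OnePoint (ZMod p))

/-- The involution `(0 ∞)(1 5)(2 3)(4 6)`. -/
def inv2 (p : ℕ) : Equiv.Perm (OnePoint (ZMod p)) :=
  Equiv.swap ((0 : ZMod p) : OnePoint (ZMod p)) OnePoint.infty *
  Equiv.swap ((1 : ZMod p) : OnePoint (ZMod p)) ((5 : ZMod p) : OnePoint (ZMod p)) *
  Equiv.swap ((2 : ZMod p) : OnePoint (ZMod p)) ((3 : ZMod p) : OnePoint (ZMod p)) *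
  Equiv.swap ((4 : ZMod p) : OnePoint (ZMod p)) ((6 : ZMod p) : OnePoint (ZMod p))

/-- The set of nonzero squares in `ℤ/p`. -/
def Rset (p : ℕ) : Set (ZMod p) := {a | a ≠ 0 ∧ IsSquare a}

/-- The set of nonsquares in `(ℤ/p)*`. -/
def Nset (p : ℕ) : Set (ZMod p) := {a | a ≠ 0 ∧ ¬ IsSquare a}

open OnePoint MulAction

theorem Subgroup.normal_of_card_eq_prime_of_card_lt_sq {H : Type*} [Group H] [Finite H]
    {p : ℕ} [hp : Fact p.Prime] (K : Subgroup H) (hK : Nat.card K = p)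
    (hH : Nat.card H < p ^ 2) : K.Normal := by
  have hindex_pos : 0 < K.index := Nat.pos_of_ne_zero K.index_ne_zero_of_finite
  have hindex_lt : K.index < p := by
    refine Nat.lt_of_mul_lt_mul_left (a := p) ?_
    calc p * K.index = Nat.card H := by rw [← K.card_mul_index, hK]
      _ < p * p := by rwa [← sq]
  have hK_sylow : ¬ p ∣ K.index := fun h => (Nat.le_of_dvd hindex_pos h).not_gt hindex_lt
  let P := (IsPGroup.of_card (n := 1) (by rw [hK, pow_one])).toSylow hK_sylow
  have hcard_dvd : Nat.card (Sylow p H) ∣ K.index := P.card_dvd_index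
  have hcard_lt : Nat.card (Sylow p H) < p :=
    (Nat.le_of_dvd hindex_pos hcard_dvd).trans_lt hindex_lt
  have hcard_one : Nat.card (Sylow p H) = 1 := by
    have := card_sylow_modEq_one p H
    rwa [Nat.ModEq, Nat.mod_eq_of_lt hcard_lt, Nat.mod_eq_of_lt hp.out.one_lt] at this
  have : Subsingleton (Sylow p H) := (Nat.card_eq_one_iff_unique.mp hcard_one).1
  simpa [P] using P.normal_of_subsingleton

theorem Subgroup.le_normalizer_of_card_eq_prime_of_card_lt_sq {H : Type*} [Group H]
    {p : ℕ} [Fact p.Prime] {K L : Subgroup H} [Finite L] (hKL : K ≤ L) (hK : Nat.card K = p)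
    (hL : Nat.card L < p ^ 2) : L ≤ Subgroup.normalizer (K : Set H) :=
  (Subgroup.normal_subgroupOf_iff_le_normalizer hKL).mp <|
    (K.subgroupOf L).normal_of_card_eq_prime_of_card_lt_sq
      (by rw [← hK]; exact Nat.card_congr (Subgroup.subgroupOfEquivOfLe hKL).toEquiv) hL

section Translations

variable {p : ℕ}

@[simp] lemma ptrans_infty (a : ZMod p) : ptrans p a ∞ = ∞ := rfl

@[simp] lemma ptrans_coe (a z : ZMod p) : ptrans p a z = ↑(z + a) := rfl

def ptransHom (p : ℕ) : Multiplicative (ZMod p) →* Equiv.Perm (OnePoint (ZMod p)) where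
  toFun a := ptrans p a.toAdd
  map_one' := by ext x; cases x <;> simp
  map_mul' a b := by ext x; cases x <;> simp [add_comm, add_left_comm]

lemma ptrans_nsmul (n : ℕ) (a : ZMod p) : ptrans p (n • a) = ptrans p a ^ n :=
  map_pow (ptransHom p) (Multiplicative.ofAdd a) n

lemma ptransHom_injective : Function.Injective (ptransHom p) := by
  intro a b hab
  simpa [ptransHom] using congr(($hab) ((0 : ZMod p) : OnePoint (ZMod p)))

def translations (p : ℕ) : Subgroup (Equiv.Perm (OnePoint (ZMod p))) := (ptransHom p).range

lemma mem_translations {σ : Equiv.Perm (OnePoint (ZMod p))} :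
    σ ∈ translations p ↔ ∃ a, ptrans p a = σ :=
  ⟨fun ⟨a, h⟩ => ⟨a.toAdd, h⟩, fun ⟨a, h⟩ => ⟨Multiplicative.ofAdd a, h⟩⟩

lemma card_translations [NeZero p] : Nat.card (translations p) = p :=
  (Nat.card_congr (MonoidHom.ofInjective ptransHom_injective).toEquiv).symm.trans (Nat.card_zmod p)

lemma apply_coe_eq_mul_of_semiconjBy [NeZero p] {σ : Equiv.Perm (OnePoint (ZMod p))} {c : ZMod p}
    (h : SemiconjBy σ (ptrans p 1) (ptrans p c)) (h0 : σ ↑(0 : ZMod p) = ↑(0 : ZMod p))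
    (z : ZMod p) : σ z = ↑(c * z) := by
  obtain ⟨n, rfl⟩ := ZMod.natCast_zmod_surjective z
  have := congr(($(h.pow_right n)) ((0 : ZMod p) : OnePoint (ZMod p)))
  simpa [← ptrans_nsmul, h0, mul_comm] using this

lemma eq_one_of_semiconjBy_ptrans [Fact p.Prime] {σ : Equiv.Perm (OnePoint (ZMod p))}
    {c : ZMod p} (h : SemiconjBy σ (ptrans p 1) (ptrans p c)) (hinf : σ ∞ = ∞)
    (h0 : σ ↑(0 : ZMod p) = ↑(0 : ZMod p)) {w : ZMod p} (hw : w ≠ 0) (hw' : σ w = w) :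
    σ = 1 := by
  have hσ := apply_coe_eq_mul_of_semiconjBy h h0
  have hc : c = 1 := (mul_eq_right₀ hw).mp (OnePoint.coe_injective ((hσ w).symm.trans hw'))
  ext x
  cases x with
  | infty => simpa using hinf
  | coe z => simp [hσ, hc]

end Translations

section TransitiveGroup

variable {p : ℕ} {G : Subgroup (Equiv.Perm (OnePoint (ZMod p)))}

lemma card_stabilizer_infty_lt_sq [NeZero p]
    (htrans : ∀ x y : OnePoint (ZMod p), ∃ g ∈ G, g x = y)
    (hcard : Nat.card G = (p ^ 3 - p) / 2) :
    Nat.card (stabilizer G (∞ : OnePoint (ZMod p))) < p ^ 2 := by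
  have : IsPretransitive G (OnePoint (ZMod p)) :=
    ⟨fun x y => let ⟨g, hg, hgx⟩ := htrans x y; ⟨⟨g, hg⟩, hgx⟩⟩
  have hX : Nat.card (OnePoint (ZMod p)) = p + 1 :=
    (Finite.card_option (α := ZMod p)).trans (by rw [Nat.card_zmod])
  have horbit_stab := (stabilizer G (∞ : OnePoint (ZMod p))).card_mul_index
  rw [index_stabilizer_of_transitive, hX, hcard] at horbit_stab
  have hp : 0 < p := Nat.pos_of_neZero p
  refine Nat.lt_of_mul_lt_mul_right (a := p + 1) ?_
  calc _ = (p ^ 3 - p) / 2 := horbit_stab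
    _ ≤ p ^ 3 := (Nat.div_le_self _ _).trans (Nat.sub_le _ _)
    _ < p ^ 2 * (p + 1) := by nlinarith [pow_pos hp 2]

lemma translations_le_map_stabilizer (htransl : ∀ a : ZMod p, ptrans p a ∈ G) :
    translations p ≤ (stabilizer G (∞ : OnePoint (ZMod p))).map G.subtype := by
  rintro _ ⟨a, rfl⟩
  exact ⟨⟨_, htransl a.toAdd⟩, rfl, rfl⟩

lemma eq_one_of_fixes_infty_zero_of_ne_zero [Fact p.Prime]
    (htrans : ∀ x y : OnePoint (ZMod p), ∃ g ∈ G, g x = y)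
    (hcard : Nat.card G = (p ^ 3 - p) / 2) (htransl : ∀ a : ZMod p, ptrans p a ∈ G)
    {σ : Equiv.Perm (OnePoint (ZMod p))} (hσ : σ ∈ G) (hinf : σ ∞ = ∞)
    (h0 : σ ↑(0 : ZMod p) = ↑(0 : ZMod p)) {w : ZMod p} (hw : w ≠ 0) (hw' : σ w = w) :
    σ = 1 := by
  have hnormalizes := Subgroup.le_normalizer_of_card_eq_prime_of_card_lt_sq
    (translations_le_map_stabilizer htransl) card_translations
    (by rw [Subgroup.card_map_of_injective G.subtype_injective]
        exact card_stabilizer_infty_lt_sq htrans hcard)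
  have hconj := (Subgroup.mem_normalizer_iff.mp (hnormalizes ⟨⟨σ, hσ⟩, hinf, rfl⟩) _).mp
    (mem_translations.mpr ⟨1, rfl⟩)
  obtain ⟨c, hc⟩ := mem_translations.mp hconj
  exact eq_one_of_semiconjBy_ptrans (by rw [SemiconjBy, hc]; simp) hinf h0 hw hw'

lemma exists_mem_apply_eq_infty_and_zero
    (htrans : ∀ x y : OnePoint (ZMod p), ∃ g ∈ G, g x = y)
    (htransl : ∀ a : ZMod p, ptrans p a ∈ G) {x y : OnePoint (ZMod p)} (hxy : x ≠ y) :
    ∃ κ ∈ G, κ x = ∞ ∧ κ y = ↑(0 : ZMod p) := by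
  obtain ⟨κ, hκ, hκx⟩ := htrans x ∞
  obtain ⟨b, hb⟩ := ne_infty_iff_exists.mp (hκx ▸ κ.injective.ne hxy.symm)
  exact ⟨ptrans p (-b) * κ, G.mul_mem (htransl _) hκ, by simp [hκx], by simp [← hb]⟩

end TransitiveGroup

theorem fixes_at_most_two_general
    (p : ℕ) [Fact p.Prime]
    (G : Subgroup (Equiv.Perm (OnePoint (ZMod p))))
    (htrans : ∀ x y : OnePoint (ZMod p), ∃ g ∈ G, g x = y)
    (hcard : Nat.card G = (p ^ 3 - p) / 2)
    (htransl : ∀ a : ZMod p, ptrans p a ∈ G) :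
    ∀ g ∈ G, g ≠ 1 → Set.ncard {x : OnePoint (ZMod p) | g x = x} ≤ 2 := by
  intro g hg hg1
  by_contra! hfix
  obtain ⟨x, y, z, hx, hy, hz, hxy, hxz, hyz⟩ := (Set.two_lt_ncard_iff (Set.toFinite _)).mp hfix
  obtain ⟨κ, hκ, hκx, hκy⟩ := exists_mem_apply_eq_infty_and_zero htrans htransl hxy
  obtain ⟨w, hw⟩ := ne_infty_iff_exists.mp (hκx ▸ κ.injective.ne hxz.symm)
  have hfix_conj : ∀ v, g v = v → (κ * g * κ⁻¹) (κ v) = κ v := by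
    intro v hv
    simp [hv]
  have hw0 : w ≠ 0 := by
    rintro rfl
    exact hyz (κ.injective (hκy.trans hw))
  refine hg1 (conj_eq_one_iff.mp (eq_one_of_fixes_infty_zero_of_ne_zero htrans hcard htransl
    (G.mul_mem (G.mul_mem hκ hg) (G.inv_mem hκ)) ?_ ?_ hw0 ?_))
  · simpa [hκx] using hfix_conj x hx
  · simpa [hκy] using hfix_conj y hy
  · simpa [hw] using hfix_conj z hz

theorem fixes_at_most_two
    (p : ℕ) [Fact p.Prime] (hp2 : p ≠ 2)
    (G : Subgroup (Equiv.Perm (OnePoint (ZMod p))))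
    (htrans : ∀ x y : OnePoint (ZMod p), ∃ g ∈ G, g x = y)
    (hcard : Nat.card G = (p ^ 3 - p) / 2)
    (htransl : ∀ a : ZMod p, ptrans p a ∈ G) :
    ∀ g ∈ G, g ≠ 1 → Set.ncard {x : OnePoint (ZMod p) | g x = x} ≤ 2 :=
  fixes_at_most_two_general p G htrans hcard htransl
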